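/- arXiv:2012.00341 — 2 statements merged into one kernel-verified Lean document; each statement's English description precedes it below -/
import Mathlib

section
/- For natural numbers p, a₀, r, d, the sum over all compositions μ = (μ₁,…,μ_d,μ_{d+1}) of r into d+1 parts with μ₁,…,μ_d positive and μ_{d+1} positive, of C(p,μ₁)···C(p,μ_d)·C(a₀,μ_{d+1}), equals the alternating sum over i from 0 to d of (−1)^i·C(d,i)·(C((d−i)·p + a₀, r) − C((d−i)·p, r)). -/
/-!
Both sides are the coefficient of `X ^ r` in `((1 + X) ^ p - 1) ^ d * ((1 + X) ^ a₀ - 1)`.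
Subtracting `1` kills the constant term of each factor, so only compositions with positive parts
contribute to the coefficient of the product; expanding the `d`-th power by the binomial theorem
gives the alternating sum.
-/

open Polynomial Finset

theorem Polynomial.coeff_prod_fin {R : Type*} [CommSemiring R] {k : ℕ} (f : Fin k → R[X])
    (r : ℕ) :
    (∏ i, f i).coeff r = ∑ μ ∈ Nat.antidiagonalTuple k r, ∏ i, (f i).coeff (μ i) := by
  rw [← coeff_coe, ← coeToPowerSeries.ringHom_apply, map_prod, PowerSeries.coeff_prod]
  simp only [coeToPowerSeries.ringHom_apply, coeff_coe]
  exact sum_equiv Finsupp.equivFunOnFinite (by simp [Nat.mem_antidiagonalTuple]) (by simp)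

theorem Polynomial.coeff_one_add_X_pow_sub_one {R : Type*} [CommRing R] (n k : ℕ) :
    ((1 + X) ^ n - 1 : R[X]).coeff k = if 0 < k then (n.choose k : R) else 0 := by
  rcases k.eq_zero_or_pos with rfl | hk
  · simp [coeff_one_add_X_pow]
  · simp [coeff_one_add_X_pow, coeff_one, hk, hk.ne']

theorem Polynomial.coeff_prod_one_add_X_pow_sub_one {R : Type*} [CommRing R] {k : ℕ}
    (e : Fin k → ℕ) (r : ℕ) :
    (∏ i, ((1 + X) ^ e i - 1 : R[X])).coeff r =
      ∑ μ ∈ (Nat.antidiagonalTuple k r).filter (fun μ => ∀ i, 0 < μ i),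
        ∏ i, ((e i).choose (μ i) : R) := by
  rw [sum_filter, coeff_prod_fin]
  simp only [coeff_one_add_X_pow_sub_one, Fintype.prod_ite_zero]
  congr!

theorem pow_sub_one_pow_mul_pow_sub_one {R : Type*} [CommRing R] (x : R) (p a d : ℕ) :
    (x ^ p - 1) ^ d * (x ^ a - 1) =
      ∑ i ∈ range (d + 1),
        ((-1) ^ i * d.choose i : ℤ) • (x ^ ((d - i) * p + a) - x ^ ((d - i) * p)) := by
  rw [sub_eq_neg_add (x ^ p), add_pow, sum_mul]
  refine sum_congr rfl fun i _ => ?_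
  simp only [zsmul_eq_mul]
  push_cast
  rw [pow_add, pow_mul']
  ring

/-- Sum over compositions of `r` into `d+1` positive parts with last factor `C(a₀,·)`. -/
theorem sum_pos_compositions_choose_last (p a₀ r d : ℕ) :
    ∑ μ ∈ (Finset.Nat.antidiagonalTuple (d + 1) r).filter (fun μ => ∀ i, 0 < μ i),
        (∏ i : Fin d, (p.choose (μ i.castSucc) : ℤ)) * (a₀.choose (μ (Fin.last d)) : ℤ) =
      ∑ i ∈ Finset.range (d + 1),
        (-1 : ℤ) ^ i * (d.choose i : ℤ) *
          ((((d - i) * p + a₀).choose r : ℤ) - (((d - i) * p).choose r : ℤ)) := by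
  have h := coeff_prod_one_add_X_pow_sub_one (R := ℤ)
    (Fin.snoc (fun _ => p) a₀ : Fin (d + 1) → ℕ) r
  simp only [Fin.prod_univ_castSucc, Fin.snoc_castSucc, Fin.snoc_last, prod_const, card_univ,
    Fintype.card_fin, pow_sub_one_pow_mul_pow_sub_one, finsetSum_coeff, coeff_smul, coeff_sub,
    coeff_one_add_X_pow, smul_eq_mul] at h
  exact h.symm
end

section
/- Let p, k, a₀ be natural numbers with k ≥ 1 and a₀ < p, and n = kp + a₀. Then Σ_{d=1}^{k−1} C(k−1, d) · Σ_{i=0}^{d−1} (−1)^i · C(d, i) · C((d−i)p + a₀, p) = C((k−1)p + a₀, p). -/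
/-!
With `f j = C(j p + a₀, p)` one has `f 0 = 0` because `a₀ < p`. Hence the inner sum is the
`d`-th forward difference `Δ^d f (0)` (its missing `i = d` term is `f 0`), and the outer sum is
Newton's forward-difference expansion of `f (k - 1)` (its missing `d = 0` term is again `f 0`).
-/

open Finset fwdDiff

variable {G : Type*} [AddCommGroup G]

theorem fwdDiff_iter_eq_sum_range_of_map_zero {f : ℕ → G} (hf : f 0 = 0) (d : ℕ) :
    Δ_[1] ^[d] f 0 = ∑ i ∈ range d, ((-1 : ℤ) ^ i * d.choose i) • f (d - i) := by
  rw [fwdDiff_iter_eq_sum_shift, ← sum_range_reflect, sum_range_succ, add_tsub_cancel_right]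
  simp only [tsub_self, hf, smul_zero, add_zero, zero_add, smul_eq_mul, mul_one]
  refine sum_congr rfl fun i hi => ?_
  have hi : i ≤ d := (mem_range.1 hi).le
  rw [Nat.sub_sub_self hi, Nat.choose_symm hi]

theorem sum_Icc_choose_smul_fwdDiff_iter_of_map_zero {f : ℕ → G} (hf : f 0 = 0) (K : ℕ) :
    ∑ d ∈ Icc 1 K, K.choose d • Δ_[1] ^[d] f 0 = f K := by
  have newton := shift_eq_sum_fwdDiff_iter 1 f K 0
  rw [range_eq_Ico, Ico_add_one_right_eq_Icc, ← insert_Icc_add_one_left_eq_Icc K.zero_le,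
    sum_insert (by simp)] at newton
  simpa [hf] using newton.symm

theorem double_sum_collapse_general (p k a₀ : ℕ) (ha : a₀ < p) :
    ∑ d ∈ Finset.Icc 1 (k - 1),
        ((k - 1).choose d : ℤ) *
          ∑ i ∈ Finset.range d,
            (-1 : ℤ) ^ i * (d.choose i : ℤ) * (((d - i) * p + a₀).choose p : ℤ) =
      (((k - 1) * p + a₀).choose p : ℤ) := by
  set f : ℕ → ℤ := fun j => ((j * p + a₀).choose p : ℤ)
  have hf : f 0 = 0 := by simp [f, Nat.choose_eq_zero_of_lt ha]
  have collapse := sum_Icc_choose_smul_fwdDiff_iter_of_map_zero hf (k - 1)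
  simpa only [fwdDiff_iter_eq_sum_range_of_map_zero hf, smul_eq_mul, nsmul_eq_mul] using collapse

/-- The double-sum collapse in the proof of Theorem A.8. -/
theorem double_sum_collapse (p k a₀ n : ℕ) (hk : 1 ≤ k) (ha : a₀ < p)
    (hn : n = k * p + a₀) :
    ∑ d ∈ Finset.Icc 1 (k - 1),
        ((k - 1).choose d : ℤ) *
          ∑ i ∈ Finset.range d,
            (-1 : ℤ) ^ i * (d.choose i : ℤ) * (((d - i) * p + a₀).choose p : ℤ) =
      (((k - 1) * p + a₀).choose p : ℤ) :=
  double_sum_collapse_general p k a₀ ha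
end
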